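/- arXiv:1207.0274 — 4 statements merged into one kernel-verified Lean document; each statement's English description precedes it below -/
import Mathlib

section
/- Let r, D be positive integers with 2rD square-free, and let d be an odd divisor of rD. If the equation W^2 = d + (8rD/d)·Z^4 has a solution in the 2-adic numbers Q_2, then d ≡ 1 (mod 8). -/
/-!
Since `2rD` is square-free, `rD` is odd, so `d` and `rD/d` are 2-adic units and the equation reads
`w² = d + 8cz⁴` with `c` a unit. If `z` were not integral, the term `8cz⁴` would dominate and
`2 v(w) = 3 + 4 v(z)`, which is impossible by parity. So `z` is integral, `w` is a unit, and
reducing modulo 8 gives `d ≡ w² ≡ 1`, because every odd square is `1 mod 8`.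
-/

namespace Padic

variable {p : ℕ} [Fact p.Prime]

lemma valuation_eq_of_norm_eq {x y : ℚ_[p]} (hx : x ≠ 0) (hy : y ≠ 0) (h : ‖x‖ = ‖y‖) :
    x.valuation = y.valuation := by
  have hp : (1 : ℝ) < p := mod_cast (Fact.out : p.Prime).one_lt
  rw [norm_eq_zpow_neg_valuation hx, norm_eq_zpow_neg_valuation hy] at h
  exact neg_inj.mp (zpow_right_injective₀ (by linarith) hp.ne' h)

lemma valuation_eq_zero_of_norm_eq_one {x : ℚ_[p]} (hx : ‖x‖ = 1) : x.valuation = 0 := by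
  rw [valuation_eq_of_norm_eq (norm_ne_zero_iff.mp (by simp [hx])) one_ne_zero (by simpa using hx),
    valuation_one]

lemma norm_le_one_of_sq_eq_add_pow_three_mul {a c z w : ℚ_[p]} (ha : ‖a‖ ≤ 1) (hc : ‖c‖ = 1)
    (h : w ^ 2 = a + (p : ℚ_[p]) ^ 3 * c * z ^ 4) : ‖z‖ ≤ 1 := by
  by_contra! hz
  have hz0 : z ≠ 0 := norm_pos_iff.mp (by linarith)
  have hc0 : c ≠ 0 := norm_ne_zero_iff.mp (by simp [hc])
  have hvz : z.valuation < 0 := by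
    rwa [← not_le, norm_le_one_iff_val_nonneg, not_le] at hz
  set t := (p : ℚ_[p]) ^ 3 * c * z ^ 4 with ht
  have ht0 : t ≠ 0 := by simp [ht, hc0, hz0, (Fact.out : p.Prime).ne_zero]
  have hvt : t.valuation = 3 + 4 * z.valuation := by
    simp [ht, hc0, hz0, (Fact.out : p.Prime).ne_zero, valuation_eq_zero_of_norm_eq_one hc]
  have hnt : 1 < ‖t‖ := by
    rw [← not_le, norm_le_one_iff_val_nonneg]; omega
  have hw : ‖w ^ 2‖ = ‖t‖ := by
    rw [h, add_eq_max_of_ne (by linarith), max_eq_right (by linarith)]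
  have hw0 : w ^ 2 ≠ 0 := norm_pos_iff.mp (by linarith)
  have hparity := valuation_eq_of_norm_eq hw0 ht0 hw
  rw [valuation_pow, hvt] at hparity
  omega

end Padic

lemma Padic.norm_intCast_eq_one_of_odd {a : ℤ} (ha : Odd a) : ‖(a : ℚ_[2])‖ = 1 :=
  norm_intCast_eq_one_iff.mpr (mod_cast Int.isCoprime_two_right.mpr ha)

lemma PadicInt.toZModPow_three_sq_of_isUnit {x : ℤ_[2]} (hx : IsUnit x) :
    toZModPow 3 x ^ 2 = 1 := by
  have hsq : ∀ u : (ZMod (2 ^ 3))ˣ, (u : ZMod (2 ^ 3)) ^ 2 = 1 := by decide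
  obtain ⟨u, hu⟩ := hx.map (toZModPow 3)
  rw [← hu, hsq]

lemma Int.modEq_one_eight_of_sq_eq_add_eight_mul_padicInt {a : ℤ} {w x : ℤ_[2]} (hw : IsUnit w)
    (h : w ^ 2 = a + 8 * x) : a ≡ 1 [ZMOD 8] := by
  have h8 : PadicInt.toZModPow 3 (8 : ℤ_[2]) = 0 := by
    rw [map_ofNat]; decide
  have hmod := congrArg (PadicInt.toZModPow 3) h
  rw [map_pow, PadicInt.toZModPow_three_sq_of_isUnit hw, map_add, map_mul, h8, zero_mul, add_zero,
    map_intCast] at hmod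
  have hmod' : ((1 : ℤ) : ZMod (2 ^ 3)) = a := mod_cast hmod
  exact ((ZMod.intCast_eq_intCast_iff _ _ _).mp hmod').symm

lemma Int.modEq_one_eight_of_sq_eq_add_eight_mul {a : ℤ} {c z w : ℚ_[2]} (ha : Odd a)
    (hc : ‖c‖ = 1) (h : w ^ 2 = a + 8 * c * z ^ 4) : a ≡ 1 [ZMOD 8] := by
  have ha1 := Padic.norm_intCast_eq_one_of_odd ha
  have hz : ‖z‖ ≤ 1 :=
    Padic.norm_le_one_of_sq_eq_add_pow_three_mul ha1.le hc (by rw [h]; norm_num)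
  have hsmall : ‖8 * c * z ^ 4‖ < 1 := by
    have h8 : ‖(8 : ℚ_[2])‖ = 1 / 8 := by
      rw [show (8 : ℚ_[2]) = (2 : ℕ) ^ 3 by norm_num, norm_pow, Padic.norm_p]
      norm_num
    rw [norm_mul, norm_mul, h8, hc, norm_pow]
    nlinarith [pow_le_one₀ (n := 4) (norm_nonneg z) hz]
  have hw : ‖w‖ = 1 := by
    have : ‖w‖ ^ 2 = 1 := by
      rw [← norm_pow, h, Padic.add_eq_max_of_ne (by linarith), ha1, max_eq_left hsmall.le]
    exact (pow_eq_one_iff_of_nonneg (norm_nonneg w) two_ne_zero).mp this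
  let W : ℤ_[2] := ⟨w, hw.le⟩
  let C : ℤ_[2] := ⟨c, hc.le⟩
  let Z : ℤ_[2] := ⟨z, hz⟩
  refine modEq_one_eight_of_sq_eq_add_eight_mul_padicInt (w := W) (x := C * Z ^ 4)
    (PadicInt.isUnit_iff.mpr hw) (Subtype.ext ?_)
  push_cast
  rw [← mul_assoc, h]
  rfl

lemma Nat.odd_of_squarefree_two_mul {n : ℕ} (h : Squarefree (2 * n)) : Odd n := by
  rw [← Nat.not_even_iff_odd, even_iff_two_dvd]
  intro h2
  exact Nat.prime_two.not_isUnit (h 2 (mul_dvd_mul_left 2 h2))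

theorem stmt_0_general (r D : ℕ)
    (hsf : Squarefree (2 * r * D)) (d : ℤ) (hdvd : d ∣ (r * D : ℤ)) (hodd : Odd d)
    (hsol : ∃ z w : ℚ_[2], w ^ 2 = (d : ℚ_[2]) + ((8 * r * D / d : ℤ) : ℚ_[2]) * z ^ 4) :
    d ≡ 1 [ZMOD 8] := by
  obtain ⟨z, w, h⟩ := hsol
  obtain ⟨m, hm⟩ := hdvd
  have hmodd : Odd m := by
    rw [mul_assoc] at hsf
    have hrD : Odd ((r : ℤ) * D) := by exact_mod_cast Nat.odd_of_squarefree_two_mul hsf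
    rw [hm] at hrD
    exact (Int.odd_mul.mp hrD).2
  have hcoeff : (8 * r * D / d : ℤ) = 8 * m := by
    rw [mul_assoc, hm, mul_left_comm, Int.mul_ediv_cancel_left _ (by rintro rfl; simp at hodd)]
  rw [hcoeff] at h
  exact Int.modEq_one_eight_of_sq_eq_add_eight_mul hodd
    (Padic.norm_intCast_eq_one_of_odd hmodd) (by push_cast at h; exact h)

/-- If `2rD` is square-free, `d` is an odd divisor of `rD`, and the homogeneous space
`W² = d + (8rD/d)·Z⁴` has a point over `ℚ₂`, then `d ≡ 1 (mod 8)`. -/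
theorem stmt_0 (r D : ℕ) (hr : 0 < r) (hD : 0 < D)
    (hsf : Squarefree (2 * r * D)) (d : ℤ) (hdvd : d ∣ (r * D : ℤ)) (hodd : Odd d)
    (hsol : ∃ z w : ℚ_[2], w ^ 2 = (d : ℚ_[2]) + ((8 * r * D / d : ℤ) : ℚ_[2]) * z ^ 4) :
    d ≡ 1 [ZMOD 8] :=
  stmt_0_general r D hsf d hdvd hodd hsol
end

section
/- Let r, D be positive integers with 2rD square-free, d an odd divisor of rD, and l an odd prime dividing d. Then the equation W^2 = d + (8rD/d)·Z^4 has a solution in Q_l if and only if 2rD/d is a quadratic residue modulo l. -/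
/-!
Write `m = 2rD/d`, so that `8rD/d = 4m`. Since `2rD = d·m` is squarefree and `l ∣ d`, the
`l`-adic valuation of `d` is `1` and `l ∤ m`. If `w² = d + 4m·z⁴` with `|z| < 1`, the term
`4m·z⁴` is too small to change `|d| = l⁻¹`, an odd power of `l`, which cannot be the norm of a
square. If `|z| ≥ 1`, dividing by `z⁴` gives `(w/z²)² ≡ 4m` modulo the maximal ideal, so `4m`, and
hence `m`, is a square mod `l`. Conversely, if `m` is a square mod `l` then so is
`d + 4m ≡ 4m ≢ 0`, and Hensel's lemma lifts it to a square in `ℤ_l`, giving the point `z = 1`.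
-/

namespace PadicInt

open Polynomial

variable {p : ℕ} [Fact p.Prime]

theorem norm_lt_one_iff_toZMod_eq_zero {x : ℤ_[p]} : ‖x‖ < 1 ↔ toZMod x = 0 := by
  rw [← RingHom.mem_ker, ker_toZMod, ← mem_nonunits]
  rfl

theorem norm_eq_one_of_toZMod_ne_zero {x : ℤ_[p]} (hx : toZMod x ≠ 0) : ‖x‖ = 1 :=
  (norm_le_one x).antisymm (not_lt.mp (mt norm_lt_one_iff_toZMod_eq_zero.mp hx))

theorem isSquare_of_isSquare_toZMod (hp2 : p ≠ 2) {a : ℤ_[p]} (ha : toZMod a ≠ 0)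
    (hsq : IsSquare (toZMod a)) : IsSquare a := by
  obtain ⟨s, hs⟩ := hsq
  set b : ℤ_[p] := (s.val : ℤ_[p])
  have hb : toZMod b = s := by simp [b]
  have hs0 : s ≠ 0 := by rintro rfl; exact ha (by simpa using hs)
  have h2 : (2 : ZMod p) ≠ 0 := Ring.two_ne_zero (by rwa [ZMod.ringChar_zmod_n])
  have hval : ‖(X ^ 2 - C a).aeval b‖ < 1 := by
    rw [norm_lt_one_iff_toZMod_eq_zero]
    simp [hb, hs, sq]
  have hder : ‖(X ^ 2 - C a).derivative.aeval b‖ = 1 := by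
    apply norm_eq_one_of_toZMod_ne_zero
    simpa [hb, hs0, one_add_one_eq_two, map_ofNat] using h2
  obtain ⟨z, hz, -⟩ :=
    hensels_lemma (F := X ^ 2 - C a) (a := b) (by rw [hder]; simpa using hval)
  refine ⟨z, ?_⟩
  simpa [sub_eq_zero, sq, eq_comm] using hz

end PadicInt

namespace Padic

variable {p : ℕ} [hp : Fact p.Prime]

theorem norm_sq_ne_inv_prime (w : ℚ_[p]) : ‖w ^ 2‖ ≠ (p : ℝ)⁻¹ := by
  rcases eq_or_ne w 0 with rfl | hw
  · simpa [eq_comm] using hp.out.ne_zero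
  rw [norm_eq_zpow_neg_valuation (pow_ne_zero 2 hw), valuation_pow, ← zpow_neg_one]
  intro h
  have := zpow_right_injective₀ (by exact_mod_cast hp.out.pos : (0 : ℝ) < p)
    (by exact_mod_cast hp.out.ne_one) h
  omega

theorem norm_le_inv_prime_of_norm_lt_one {x : ℚ_[p]} (hx : ‖x‖ < 1) : ‖x‖ ≤ (p : ℝ)⁻¹ := by
  rw [← zpow_neg_one, norm_le_pow_iff_norm_lt_pow_add_one]
  simpa using hx

theorem norm_intCast_eq_inv_prime {d : ℤ} (hd : (p : ℤ) ∣ d) (hd2 : ¬ (p : ℤ) ^ 2 ∣ d) :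
    ‖(d : ℚ_[p])‖ = (p : ℝ)⁻¹ := by
  have hle := (norm_int_le_pow_iff_dvd d 1).mpr (by simpa using hd)
  have hgt := mt (norm_int_le_pow_iff_dvd d 2).mp hd2
  rw [norm_le_pow_iff_norm_lt_pow_add_one, not_lt] at hgt
  norm_num at hle hgt
  exact hle.antisymm hgt

theorem isSquare_intCast_zmod_of_norm_sq_sub_lt_one {m : ℤ} {w : ℚ_[p]} (h : ‖w ^ 2 - m‖ < 1) :
    IsSquare (m : ZMod p) := by
  have hw : ‖w‖ ≤ 1 := by
    have : ‖w ^ 2‖ ≤ 1 := by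
      simpa using (nonarchimedean (w ^ 2 - (m : ℚ_[p])) m).trans (max_le h.le (norm_int_le_one m))
    rw [norm_pow] at this
    nlinarith [norm_nonneg w]
  set W : ℤ_[p] := ⟨w, hw⟩
  have hW : ‖W ^ 2 - m‖ < 1 := by rw [PadicInt.norm_def]; push_cast; exact h
  rw [PadicInt.norm_lt_one_iff_toZMod_eq_zero, map_sub, map_intCast, sub_eq_zero] at hW
  exact ⟨PadicInt.toZMod W, by rw [← hW, map_pow, sq]⟩

end Padic

theorem exists_sq_eq_add_mul_pow_four_iff {p : ℕ} [hp : Fact p.Prime] (hp2 : p ≠ 2) {d m : ℤ}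
    (hpd : (p : ℤ) ∣ d) (hpd2 : ¬ (p : ℤ) ^ 2 ∣ d) (hpm : ¬ (p : ℤ) ∣ m) :
    (∃ z w : ℚ_[p], w ^ 2 = d + m * z ^ 4) ↔ IsSquare (m : ZMod p) := by
  have hd : ‖(d : ℚ_[p])‖ = (p : ℝ)⁻¹ := Padic.norm_intCast_eq_inv_prime hpd hpd2
  have hp0 : (0 : ℝ) < (p : ℝ)⁻¹ := inv_pos.mpr (by exact_mod_cast hp.out.pos)
  have hp1 : (p : ℝ)⁻¹ < 1 := inv_lt_one_of_one_lt₀ (by exact_mod_cast hp.out.one_lt)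
  constructor
  · rintro ⟨z, w, h⟩
    by_cases hz : ‖z‖ < 1
    · have hsmall : ‖(m : ℚ_[p]) * z ^ 4‖ < ‖(d : ℚ_[p])‖ := calc
        ‖(m : ℚ_[p]) * z ^ 4‖ ≤ ‖z‖ ^ 4 := by
          simpa [norm_mul, norm_pow] using
            mul_le_of_le_one_left (by positivity) (Padic.norm_int_le_one m)
        _ ≤ (p : ℝ)⁻¹ ^ 4 := by gcongr; exact Padic.norm_le_inv_prime_of_norm_lt_one hz
        _ < ‖(d : ℚ_[p])‖ := by
          rw [hd]
          exact pow_lt_self_of_lt_one₀ hp0 hp1 (by norm_num)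
      refine absurd ?_ (Padic.norm_sq_ne_inv_prime w)
      rw [h, Padic.add_eq_max_of_ne hsmall.ne', max_eq_left hsmall.le, hd]
    · have hz0 : z ≠ 0 := by rintro rfl; simp at hz
      refine Padic.isSquare_intCast_zmod_of_norm_sq_sub_lt_one (w := w / z ^ 2) ?_
      have : (w / z ^ 2) ^ 2 - m = d / z ^ 4 := by field_simp; linear_combination h
      rw [this, norm_div, norm_pow, div_lt_one (by positivity), hd]
      exact hp1.trans_le (one_le_pow₀ (not_lt.mp hz))
  · intro hm
    have hdm : ((d + m : ℤ) : ZMod p) = m := by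
      rw [Int.cast_add, (ZMod.intCast_zmod_eq_zero_iff_dvd d p).mpr hpd, zero_add]
    have hdm0 : ((d + m : ℤ) : ZMod p) ≠ 0 := by
      rwa [hdm, Ne, ZMod.intCast_zmod_eq_zero_iff_dvd]
    obtain ⟨w, hw⟩ := (PadicInt.isSquare_of_isSquare_toZMod hp2 (a := (d + m : ℤ))
      (by rw [map_intCast]; exact hdm0) (by rwa [map_intCast, hdm])).map PadicInt.Coe.ringHom
    refine ⟨1, w, ?_⟩
    simpa [sq] using hw.symm

theorem isSquare_mul_self_mul_iff {K : Type*} [Field K] {c : K} (hc : c ≠ 0) {a : K} :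
    IsSquare (c * c * a) ↔ IsSquare a := by
  refine ⟨fun h => ?_, (IsSquare.mul_self c).mul⟩
  simpa [hc] using h.div (IsSquare.mul_self c)

theorem stmt_3_general (r D : ℕ)
    (hsf : Squarefree (2 * r * D)) (d : ℤ) (hdvd : d ∣ (r * D : ℤ))
    (l : ℕ) [hl : Fact l.Prime] (hlodd : l ≠ 2) (hldvd : (l : ℤ) ∣ d) :
    (∃ z w : ℚ_[l], w ^ 2 = (d : ℚ_[l]) + ((8 * r * D / d : ℤ) : ℚ_[l]) * z ^ 4) ↔
      IsSquare ((2 * r * D / d : ℤ) : ZMod l) := by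
  set m := (2 * r * D / d : ℤ)
  have hdvd2 : d ∣ 2 * r * D := by rw [mul_assoc]; exact hdvd.mul_left 2
  have h8 : (8 * r * D / d : ℤ) = 2 * 2 * m := by
    rw [show (8 * r * D : ℤ) = 2 * 2 * (2 * r * D) by ring, Int.mul_ediv_assoc _ hdvd2]
  have hdm : ¬ (l : ℤ) ^ 2 ∣ d * m := by
    rw [Int.mul_ediv_cancel' hdvd2, sq]
    intro h
    exact hl.out.ne_one (Nat.isUnit_iff.mp (hsf l (by exact_mod_cast h)))
  have hld2 : ¬ (l : ℤ) ^ 2 ∣ d := fun h => hdm (h.mul_right m)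
  have h2 : (2 : ZMod l) ≠ 0 := Ring.two_ne_zero (by rwa [ZMod.ringChar_zmod_n])
  have hlm : ¬ (l : ℤ) ∣ 2 * 2 * m := by
    rw [← ZMod.intCast_zmod_eq_zero_iff_dvd]
    simp only [Int.cast_mul, Int.cast_ofNat]
    refine mul_ne_zero (mul_ne_zero h2 h2) fun h => hdm ?_
    rw [sq]
    exact mul_dvd_mul hldvd ((ZMod.intCast_zmod_eq_zero_iff_dvd m l).mp h)
  rw [h8, exists_sq_eq_add_mul_pow_four_iff hlodd hldvd hld2 hlm]
  simp only [Int.cast_mul, Int.cast_ofNat]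
  exact isSquare_mul_self_mul_iff h2

/-- For `2rD` square-free, `d` an odd divisor of `rD` and `l` an odd prime dividing `d`,
the homogeneous space `W² = d + (8rD/d)·Z⁴` has a `ℚ_l`-point iff `2rD/d` is a quadratic
residue modulo `l`. -/
theorem stmt_3 (r D : ℕ) (hr : 0 < r) (hD : 0 < D)
    (hsf : Squarefree (2 * r * D)) (d : ℤ) (hdvd : d ∣ (r * D : ℤ)) (hodd : Odd d)
    (l : ℕ) [hl : Fact l.Prime] (hlodd : l ≠ 2) (hldvd : (l : ℤ) ∣ d) :
    (∃ z w : ℚ_[l], w ^ 2 = (d : ℚ_[l]) + ((8 * r * D / d : ℤ) : ℚ_[l]) * z ^ 4) ↔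
      IsSquare ((2 * r * D / d : ℤ) : ZMod l) :=
  stmt_3_general r D hsf d hdvd l (hl := hl) hlodd hldvd
end

section
/- Let E : y^2 = x^3 - 2rDx with 2rD square-free, Q a point of infinite order in E(Q), and t an odd prime dividing rD. If v_t(x(Q)) ≤ 0, then for every nonzero integer k: v_t(x([2k]Q)) and v_t(x([2k+1]Q)) are nonpositive even integers, while v_t(x([2k]Q + T)) and v_t(x([2k+1]Q + T)) are positive odd integers, where T = (0,0). -/
/-- The curve `y² = x³ + Ax` over `ℚ`. -/
def Ecurve (A : ℚ) : WeierstrassCurve.Affine ℚ := ⟨0, 0, 0, A, 0⟩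

/-- The `x`-coordinate of an affine point, with junk value `0` at the point at infinity. -/
def xCoord {A : ℚ} : (Ecurve A).Point → ℚ
  | .zero => 0
  | @WeierstrassCurve.Affine.Point.some _ _ _ x _ _ => x

/-!
Write `A = -2rD`, so that `v_t(A) = 1`. On `y² = x(x² + A)` with `x ≠ 0`, comparing valuations
shows that `v_t(x)` is either even and `≤ 0` or odd and `≥ 1`. If three points add up to zero, the
product of their `x`-coordinates is the square of the `y`-intercept of the line through them, so
"`v_t(x)` even" propagates from `Q` to every nonzero multiple `nQ` (which has `x ≠ 0` since `Q` has
infinite order). Finally `x(P + T) = A / x(P)` turns the valuation `v` into `1 - v`.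
-/

namespace padicValRat

variable {p : ℕ}

lemma add_ne_zero_of_ne {q r : ℚ} (hqr : padicValRat p q ≠ padicValRat p r) : q + r ≠ 0 :=
  fun h => hqr (by rw [eq_neg_of_add_eq_zero_left h, padicValRat.neg])

variable [Fact p.Prime]

lemma even_of_isSquare {q : ℚ} (hq : IsSquare q) : Even (padicValRat p q) := by
  obtain ⟨r, rfl⟩ := hq
  rcases eq_or_ne r 0 with rfl | hr
  · simp
  · exact ⟨_, padicValRat.mul hr hr⟩

lemma even_of_isSquare_mul_mul {a b c : ℚ} (ha : a ≠ 0) (hb : b ≠ 0) (hc : c ≠ 0)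
    (habc : IsSquare (a * b * c)) (hae : Even (padicValRat p a)) (hbe : Even (padicValRat p b)) :
    Even (padicValRat p c) := by
  have h := even_of_isSquare (p := p) habc
  rw [padicValRat.mul (mul_ne_zero ha hb) hc, padicValRat.mul ha hb] at h
  exact (Int.even_add.mp h).mp (hae.add hbe)

end padicValRat

namespace Ecurve

open WeierstrassCurve.Affine Polynomial

variable {A : ℚ}

@[simp] lemma a₁_eq : (Ecurve A).a₁ = 0 := rfl
@[simp] lemma a₂_eq : (Ecurve A).a₂ = 0 := rfl
@[simp] lemma a₃_eq : (Ecurve A).a₃ = 0 := rfl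
@[simp] lemma a₄_eq : (Ecurve A).a₄ = A := rfl
@[simp] lemma a₆_eq : (Ecurve A).a₆ = 0 := rfl

lemma equation_iff {x y : ℚ} : (Ecurve A).Equation x y ↔ y ^ 2 = x ^ 3 + A * x := by
  rw [WeierstrassCurve.Affine.equation_iff]
  simp only [Ecurve]
  ring_nf

lemma negY_eq (x y : ℚ) : (Ecurve A).negY x y = -y := by
  simp [negY, Ecurve]

lemma xCoord_zero : xCoord (0 : (Ecurve A).Point) = 0 := rfl

lemma xCoord_neg (P : (Ecurve A).Point) : xCoord (-P) = xCoord P := by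
  cases P <;> rfl

-- Vieta at `X = 0` for the cubic cut out on the curve by the line through the two points.
lemma mul_mul_addX_eq_sq {x₁ x₂ y₁ y₂ : ℚ} (h₁ : (Ecurve A).Equation x₁ y₁)
    (h₂ : (Ecurve A).Equation x₂ y₂) (hxy : ¬(x₁ = x₂ ∧ y₁ = (Ecurve A).negY x₂ y₂)) :
    x₁ * x₂ * (Ecurve A).addX x₁ x₂ ((Ecurve A).slope x₁ x₂ y₁ y₂)
      = (y₁ - (Ecurve A).slope x₁ x₂ y₁ y₂ * x₁) ^ 2 := by
  have h := congrArg (eval 0) (addPolynomial_slope h₁ h₂ hxy)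
  rw [addPolynomial_eq] at h
  simp only [Cubic.toPoly, eval_neg, eval_add, eval_sub, eval_mul, eval_pow, eval_C, eval_X, a₁_eq,
    a₂_eq, a₃_eq, a₆_eq] at h
  linear_combination -h

lemma isSquare_xCoord_mul_xCoord_mul_xCoord_add (P P' : (Ecurve A).Point) :
    IsSquare (xCoord P * xCoord P' * xCoord (P + P')) := by
  rcases P with _ | @⟨x₁, y₁, h₁⟩
  · exact ⟨0, by simp [xCoord]⟩
  rcases P' with _ | @⟨x₂, y₂, h₂⟩
  · exact ⟨0, by simp [xCoord]⟩
  by_cases hxy : x₁ = x₂ ∧ y₁ = (Ecurve A).negY x₂ y₂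
  · exact ⟨0, by simp [Point.add_of_Y_eq hxy.1 hxy.2, xCoord_zero]⟩
  · rw [Point.add_some hxy]
    exact ⟨_, (mul_mul_addX_eq_sq h₁.1 h₂.1 hxy).trans (sq _)⟩

lemma two_nsmul_eq_zero_of_xCoord_eq_zero {P : (Ecurve A).Point} (hP : xCoord P = 0) :
    2 • P = 0 := by
  rcases P with _ | @⟨x, y, h⟩
  · rfl
  · obtain rfl : x = 0 := hP
    have hy : y = 0 := by
      have := equation_iff.mp h.1
      exact pow_eq_zero_iff two_ne_zero |>.mp (by simpa using this)
    rw [two_nsmul]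
    exact Point.add_self_of_Y_eq (by rw [negY_eq, hy, neg_zero])

lemma xCoord_add_T {P : (Ecurve A).Point} (hT : (Ecurve A).Nonsingular 0 0)
    (hP : xCoord P ≠ 0) : xCoord (P + .some _ _ hT) = A / xCoord P := by
  rcases P with _ | @⟨x, y, h⟩
  · exact absurd rfl hP
  have hx : x ≠ 0 := hP
  rw [Point.add_of_X_ne hx]
  show (Ecurve A).addX x 0 ((Ecurve A).slope x 0 y 0) = A / x
  rw [slope_of_X_ne hx, addX]
  have e := equation_iff.mp h.1
  simp only [Ecurve]
  field_simp
  linear_combination x * e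


end Ecurve


namespace Ecurve

open WeierstrassCurve.Affine

variable {A : ℚ} {t : ℕ} [Fact t.Prime]

lemma padicValRat_dichotomy (hA : padicValRat t A = 1) {x y : ℚ} (hx : x ≠ 0)
    (h : (Ecurve A).Equation x y) :
    (padicValRat t x ≤ 0 ∧ Even (padicValRat t x)) ∨
      (1 ≤ padicValRat t x ∧ Odd (padicValRat t x)) := by
  have hA0 : A ≠ 0 := by rintro rfl; simp at hA
  have hx2 : padicValRat t (x ^ 2) = 2 * padicValRat t x := by
    rw [padicValRat.pow]; rfl
  have hne : padicValRat t (x ^ 2) ≠ padicValRat t A := by omega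
  have hsum0 := padicValRat.add_ne_zero_of_ne hne
  have hsum := padicValRat.add_eq_min hsum0 (pow_ne_zero 2 hx) hA0 hne
  have hy : y ^ 2 = x * (x ^ 2 + A) := by linear_combination equation_iff.mp h
  have hval : 2 * padicValRat t y = padicValRat t x + min (2 * padicValRat t x) 1 := by
    rw [← hx2, ← hA, ← hsum, ← padicValRat.mul hx hsum0, ← hy, padicValRat.pow]; rfl
  rcases le_or_gt (padicValRat t x) 0 with hle | hgt
  · exact .inl ⟨hle, by rw [Int.even_iff]; omega⟩
  · exact .inr ⟨hgt, by rw [Int.odd_iff]; omega⟩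

section InfiniteOrder

variable (hA : padicValRat t A = 1) {Q : (Ecurve A).Point} (hQ : ¬IsOfFinAddOrder Q)
include hA

lemma even_padicValRat_xCoord_iff {P : (Ecurve A).Point} (hP : xCoord P ≠ 0) :
    Even (padicValRat t (xCoord P)) ↔ padicValRat t (xCoord P) ≤ 0 := by
  rcases P with _ | @⟨x, y, h⟩
  · exact absurd rfl hP
  rcases padicValRat_dichotomy hA hP h.1 with ⟨hle, he⟩ | ⟨hge, ho⟩
  · exact ⟨fun _ => hle, fun _ => he⟩
  · exact ⟨fun he => absurd ho (Int.not_odd_iff_even.mpr he), fun hle => by omega⟩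

omit hA in
include hQ in
lemma xCoord_zsmul_ne_zero {n : ℤ} (hn : n ≠ 0) : xCoord (n • Q) ≠ 0 := by
  refine fun h => hQ (isOfFinAddOrder_iff_zsmul_eq_zero.mpr ⟨2 * n, by omega, ?_⟩)
  rw [mul_zsmul, two_zsmul, ← two_nsmul]
  exact two_nsmul_eq_zero_of_xCoord_eq_zero h

omit hA in
include hQ in
lemma xCoord_ne_zero_of_not_isOfFinAddOrder : xCoord Q ≠ 0 := by
  simpa using xCoord_zsmul_ne_zero hQ one_ne_zero

variable (hv : padicValRat t (xCoord Q) ≤ 0)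
include hQ hv

lemma even_padicValRat_xCoord_natCast_zsmul (n : ℕ) :
    Even (padicValRat t (xCoord ((n : ℤ) • Q))) := by
  have hQ₀ := xCoord_ne_zero_of_not_isOfFinAddOrder hQ
  have hQe := (even_padicValRat_xCoord_iff hA hQ₀).mpr hv
  induction n with
  | zero => simp [xCoord_zero]
  | succ n ih =>
    rw [Nat.cast_succ, add_zsmul, one_zsmul]
    rcases eq_or_ne n 0 with rfl | hn
    · simpa using hQe
    · refine padicValRat.even_of_isSquare_mul_mul (xCoord_zsmul_ne_zero hQ (by omega)) hQ₀ ?_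
        (isSquare_xCoord_mul_xCoord_mul_xCoord_add _ _) ih hQe
      rw [← add_one_zsmul]
      exact xCoord_zsmul_ne_zero hQ (by omega)

lemma even_padicValRat_xCoord_zsmul (n : ℤ) : Even (padicValRat t (xCoord (n • Q))) := by
  rcases Int.natAbs_eq n with h | h <;> rw [h]
  · exact even_padicValRat_xCoord_natCast_zsmul hA hQ hv _
  · rw [neg_zsmul, xCoord_neg]
    exact even_padicValRat_xCoord_natCast_zsmul hA hQ hv _

lemma padicValRat_xCoord_zsmul {n : ℤ} (hn : n ≠ 0) :
    padicValRat t (xCoord (n • Q)) ≤ 0 ∧ Even (padicValRat t (xCoord (n • Q))) :=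
  have he := even_padicValRat_xCoord_zsmul hA hQ hv n
  ⟨(even_padicValRat_xCoord_iff hA (xCoord_zsmul_ne_zero hQ hn)).mp he, he⟩

lemma padicValRat_xCoord_zsmul_add_T (hT : (Ecurve A).Nonsingular 0 0) {n : ℤ} (hn : n ≠ 0) :
    1 ≤ padicValRat t (xCoord (n • Q + .some _ _ hT)) ∧
      Odd (padicValRat t (xCoord (n • Q + .some _ _ hT))) := by
  obtain ⟨hle, he⟩ := padicValRat_xCoord_zsmul hA hQ hv hn
  have hx := xCoord_zsmul_ne_zero hQ hn
  have hA0 : A ≠ 0 := by rintro rfl; simp at hA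
  rw [xCoord_add_T hT hx, padicValRat.div hA0 hx, hA]
  exact ⟨by omega, by rw [Int.odd_iff]; rw [Int.even_iff] at he; omega⟩

end InfiniteOrder

end Ecurve

theorem stmt_10_general (r D : ℕ) (hsf : Squarefree (2 * r * D))
    (t : ℕ) (ht : t.Prime) (htdvd : t ∣ r * D)
    (hT : (Ecurve (-(2 * r * D : ℚ))).Nonsingular 0 0)
    (Q : (Ecurve (-(2 * r * D : ℚ))).Point) (hQ : ¬ IsOfFinAddOrder Q)
    (hv : padicValRat t (xCoord Q) ≤ 0) :
    ∀ k : ℤ, k ≠ 0 →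
      (padicValRat t (xCoord ((2 * k) • Q)) ≤ 0 ∧
        Even (padicValRat t (xCoord ((2 * k) • Q)))) ∧
      (padicValRat t (xCoord ((2 * k + 1) • Q)) ≤ 0 ∧
        Even (padicValRat t (xCoord ((2 * k + 1) • Q)))) ∧
      (1 ≤ padicValRat t (xCoord ((2 * k) • Q + .some _ _ hT)) ∧
        Odd (padicValRat t (xCoord ((2 * k) • Q + .some _ _ hT)))) ∧
      (1 ≤ padicValRat t (xCoord ((2 * k + 1) • Q + .some _ _ hT)) ∧
        Odd (padicValRat t (xCoord ((2 * k + 1) • Q + .some _ _ hT)))) := by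
  have : Fact t.Prime := ⟨ht⟩
  have hA : padicValRat t (-(2 * r * D : ℚ)) = 1 := by
    have hdvd : t ∣ 2 * r * D := mul_assoc 2 r D ▸ htdvd.mul_left 2
    rw [padicValRat.neg, ← Nat.cast_ofNat, ← Nat.cast_mul, ← Nat.cast_mul, padicValRat.of_nat,
      ← Nat.factorization_def _ ht, Nat.factorization_eq_one_of_squarefree hsf ht hdvd, Nat.cast_one]
  intro k hk
  exact ⟨Ecurve.padicValRat_xCoord_zsmul hA hQ hv (by omega),
    Ecurve.padicValRat_xCoord_zsmul hA hQ hv (by omega),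
    Ecurve.padicValRat_xCoord_zsmul_add_T hA hQ hv hT (by omega),
    Ecurve.padicValRat_xCoord_zsmul_add_T hA hQ hv hT (by omega)⟩

/-- On `E : y² = x³ - 2rDx` with `2rD` square-free, for `Q` of infinite order, `t` an odd
prime dividing `rD` with `v_t(x(Q)) ≤ 0`, and any nonzero integer `k`:
`v_t(x([2k]Q))` and `v_t(x([2k+1]Q))` are nonpositive and even, while
`v_t(x([2k]Q+T))` and `v_t(x([2k+1]Q+T))` are positive and odd,
where `T = (0,0)`. -/
theorem stmt_10 (r D : ℕ) (hr : 0 < r) (hD : 0 < D) (hsf : Squarefree (2 * r * D))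
    (t : ℕ) (ht : t.Prime) (htodd : t ≠ 2) (htdvd : t ∣ r * D)
    (hT : (Ecurve (-(2 * r * D : ℚ))).Nonsingular 0 0)
    (Q : (Ecurve (-(2 * r * D : ℚ))).Point) (hQ : ¬ IsOfFinAddOrder Q)
    (hv : padicValRat t (xCoord Q) ≤ 0) :
    ∀ k : ℤ, k ≠ 0 →
      (padicValRat t (xCoord ((2 * k) • Q)) ≤ 0 ∧
        Even (padicValRat t (xCoord ((2 * k) • Q)))) ∧
      (padicValRat t (xCoord ((2 * k + 1) • Q)) ≤ 0 ∧
        Even (padicValRat t (xCoord ((2 * k + 1) • Q)))) ∧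
      (1 ≤ padicValRat t (xCoord ((2 * k) • Q + .some _ _ hT)) ∧
        Odd (padicValRat t (xCoord ((2 * k) • Q + .some _ _ hT)))) ∧
      (1 ≤ padicValRat t (xCoord ((2 * k + 1) • Q + .some _ _ hT)) ∧
        Odd (padicValRat t (xCoord ((2 * k + 1) • Q + .some _ _ hT)))) :=
  stmt_10_general r D hsf t ht htdvd hT Q hQ hv
end

section
/- Let E : y^2 = x^3 - 2rDx with 2rD square-free and let P be a point of infinite order in E(Q). Then the difference between the canonical and Weil heights satisfies -(1/4)·log(4rD) ≤ ĥ(P) - (1/2)·h(P) ≤ (1/4)·log(2rD+1) + (1/12)·log 2, where h(P) = log max{|a|, d^2} for x(P) = a/d^2 in lowest terms. -/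
/-- The naive (Weil) logarithmic height of a rational number `x = a/d²` in lowest terms,
`h = log max {|a|, d²}`. -/
noncomputable def naiveHeight (x : ℚ) : ℝ := Real.log (max (|x.num| : ℝ) (x.den : ℝ))

def xDouble (A x : ℚ) : ℚ := (x ^ 2 - A) ^ 2 / (4 * (x ^ 3 + A * x))

open WeierstrassCurve.Affine in
theorem xCoord_add_self {A : ℚ} {Q : (Ecurve A).Point} (hQ : Q ≠ 0) (h2Q : Q + Q ≠ 0) :
    0 < xCoord Q ^ 3 + A * xCoord Q ∧
      xCoord (Q + Q) = xDouble A (xCoord Q) := by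
  cases Q with
  | zero => exact absurd rfl hQ
  | @some x y h =>
    have hneg : (Ecurve A).negY x y = -y := by simp [negY, Ecurve]
    have hy : y ≠ 0 := fun hy => h2Q (Point.add_self_of_Y_eq (by rw [hneg, hy, neg_zero]))
    have hyneg : y ≠ (Ecurve A).negY x y := by rw [hneg]; contrapose! hy; linarith
    have hcurve : y ^ 2 = x ^ 3 + A * x := by
      simpa [Ecurve] using ((Ecurve A).equation_iff x y).mp h.1
    change 0 < x ^ 3 + A * x ∧ xCoord (_ + _) = xDouble A x
    refine ⟨hcurve ▸ by positivity, ?_⟩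
    rw [Point.add_self_of_Y_ne hyneg]
    show (Ecurve A).addX x x ((Ecurve A).slope x x y y) = _
    rw [slope_of_Y_ne rfl hyneg, hneg, xDouble, ← hcurve]
    simp only [addX, Ecurve]
    field_simp
    linear_combination (-32 * x) * hcurve

theorem xCoord_two_pow_succ_zsmul {A : ℚ} {P : (Ecurve A).Point} (hP : ¬ IsOfFinAddOrder P)
    (n : ℕ) :
    0 < xCoord ((2 ^ n : ℤ) • P) ^ 3 + A * xCoord ((2 ^ n : ℤ) • P) ∧
      xCoord ((2 ^ (n + 1) : ℤ) • P) = xDouble A (xCoord ((2 ^ n : ℤ) • P)) := by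
  have hne : ∀ m : ℕ, (2 ^ m : ℤ) • P ≠ 0 := fun m h =>
    hP (isOfFinAddOrder_iff_zsmul_eq_zero.mpr ⟨2 ^ m, by positivity, h⟩)
  have hsucc : (2 ^ (n + 1) : ℤ) • P = (2 ^ n : ℤ) • P + (2 ^ n : ℤ) • P := by
    rw [← add_zsmul, pow_succ, mul_two]
  rw [hsucc]
  exact xCoord_add_self (hne n) (hsucc ▸ hne (n + 1))

theorem Prime.sq_dvd_of_pow_three_dvd_sq {M : Type*} [CommMonoidWithZero M] [IsCancelMulZero M]
    {p s : M} (hp : Prime p) (h : p ^ 3 ∣ s ^ 2) : p ^ 2 ∣ s := by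
  obtain ⟨t, rfl⟩ := hp.dvd_of_dvd_pow ((dvd_pow_self p three_ne_zero).trans h)
  have ht : p ^ 2 * p ∣ p ^ 2 * t ^ 2 := by rwa [← pow_succ, ← mul_pow]
  obtain ⟨u, rfl⟩ := hp.dvd_of_dvd_pow ((mul_dvd_mul_iff_left (pow_ne_zero 2 hp.ne_zero)).mp ht)
  exact ⟨u, by rw [← mul_assoc, ← sq]⟩

theorem Nat.dvd_sq_of_forall_prime_dvd {k m : ℕ} (hk : k ≠ 0) (hm : m ≠ 0)
    (h : ∀ p : ℕ, p.Prime → p ∣ k → p ∣ m ∧ ¬ p ^ 3 ∣ k) : k ∣ m ^ 2 := by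
  rw [← Nat.factorization_le_iff_dvd hk (pow_ne_zero 2 hm), Finsupp.le_def]
  intro p
  by_cases hpk : p.Prime ∧ p ∣ k
  · obtain ⟨hpm, hp3⟩ := h p hpk.1 hpk.2
    have hk2 : k.factorization p < 3 := by
      by_contra! h3
      exact hp3 ((hpk.1.pow_dvd_iff_le_factorization hk).mpr h3)
    have hm1 := hpk.1.factorization_pos_of_dvd hm hpm
    simp only [Nat.factorization_pow, Finsupp.smul_apply, smul_eq_mul]
    omega
  · rw [not_and_or] at hpk
    rcases hpk with hp | hpk
    · simp [Nat.factorization_eq_zero_of_not_prime k hp]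
    · simp [Nat.factorization_eq_zero_of_not_dvd hpk]

theorem Int.dvd_sq_of_forall_prime_dvd {k m : ℤ} (hk : k ≠ 0) (hm : m ≠ 0)
    (h : ∀ p : ℤ, Prime p → p ∣ k → p ∣ m ∧ ¬ p ^ 3 ∣ k) : k ∣ m ^ 2 := by
  rw [← Int.natAbs_dvd_natAbs, Int.natAbs_pow]
  refine Nat.dvd_sq_of_forall_prime_dvd (by simpa) (by simpa) fun p hp hpk => ?_
  have hpk' : (p : ℤ) ∣ k := Int.natCast_dvd.mpr hpk
  obtain ⟨hpm, hp3⟩ := h p (Nat.prime_iff_prime_int.mp hp) hpk'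
  refine ⟨Int.natCast_dvd.mp hpm, fun h3 => hp3 ?_⟩
  exact_mod_cast Int.natCast_dvd.mpr h3

theorem IsCoprime.dvd_of_dvd_mul_of_dvd_mul {R : Type*} [CommRing R] {a b c k : R}
    (h : IsCoprime a b) (ha : c ∣ k * a) (hb : c ∣ k * b) : c ∣ k := by
  obtain ⟨u, v, huv⟩ := h
  have hk : k = u * (k * a) + v * (k * b) := by linear_combination (-k) * huv
  exact hk ▸ dvd_add (ha.mul_left u) (hb.mul_left v)

section DuplicationArithmetic

variable {N a d p : ℤ}

theorem prime_dvd_num_and_dvd_of_dvd_duplication (hcop : IsCoprime a d) (hN : 2 ∣ N)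
    (hp : Prime p) (hs : p ∣ a ^ 2 + N * d ^ 2) (hB : p ∣ 4 * d * (a * (a ^ 2 - N * d ^ 2))) :
    p ∣ a ∧ p ∣ N := by
  have hpN : p ∣ N → p ∣ a := fun h =>
    hp.dvd_of_dvd_pow ((dvd_add_left (h.mul_right (d ^ 2))).mp hs)
  have hpd : p ∣ d → p ∣ a := fun h =>
    hp.dvd_of_dvd_pow ((dvd_add_left ((h.pow two_ne_zero).mul_left N)).mp hs)
  have hp2 : p ∣ 2 → p ∣ a := fun h => hpN (h.trans hN)
  suffices hpa : p ∣ a by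
    refine ⟨hpa, (hp.dvd_or_dvd ((dvd_add_right (hpa.pow two_ne_zero)).mp hs)).resolve_right
      fun h => hp.not_isUnit (hcop.isUnit_of_dvd' hpa (hp.dvd_of_dvd_pow h))⟩
  rcases hp.dvd_or_dvd hB with h | h
  · rcases hp.dvd_or_dvd h with h | h
    · exact hp2 (hp.dvd_of_dvd_pow (show p ∣ 2 ^ 2 by norm_num [h]))
    · exact hpd h
  · rcases hp.dvd_or_dvd h with h | h
    · exact h
    · have h2a := dvd_add hs h
      rw [show a ^ 2 + N * d ^ 2 + (a ^ 2 - N * d ^ 2) = 2 * a ^ 2 by ring] at h2a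
      rcases hp.dvd_or_dvd h2a with h | h
      · exact hp2 h
      · exact hp.dvd_of_dvd_pow h

theorem not_prime_sq_dvd_of_dvd_num (hcop : IsCoprime a d) (hsf : Squarefree N) (hp : Prime p)
    (hpa : p ∣ a) : ¬ p ^ 2 ∣ a ^ 2 + N * d ^ 2 := by
  intro hs
  have hpd : ¬ p ∣ d ^ 2 := fun h =>
    hp.not_isUnit (hcop.isUnit_of_dvd' hpa (hp.dvd_of_dvd_pow h))
  have hNd : p ^ 2 ∣ N * d ^ 2 := (dvd_add_right (pow_dvd_pow_of_dvd hpa 2)).mp hs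
  exact hp.not_isUnit (hsf p (by simpa [sq] using hp.pow_dvd_of_dvd_mul_right 2 hpd hNd))

-- `(u + v)² ≥ 4uv` for `u = (a² - N d²)²` and `v = 4 N a² d²`, where `u + v = (a² + N d²)²`
theorem mul_sq_duplication_den_le (N a d : ℤ) :
    N * (4 * d * (a * (a ^ 2 - N * d ^ 2))) ^ 2 ≤ (a ^ 2 + N * d ^ 2) ^ 4 := by
  nlinarith [sq_nonneg ((a ^ 2 - N * d ^ 2) ^ 2 - 4 * N * a ^ 2 * d ^ 2)]

theorem sq_dvd_duplication_den (hpa : p ∣ a) (hpN : p ∣ N) :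
    p ^ 2 ∣ 4 * d * (a * (a ^ 2 - N * d ^ 2)) :=
  (sq p ▸ mul_dvd_mul hpa (dvd_sub (hpa.pow two_ne_zero) (hpN.mul_right _))).mul_left _

end DuplicationArithmetic

section DuplicationGcd

variable {N a d a' k : ℤ}

theorem dvd_sq_of_dvd_duplication (hcop : IsCoprime a d) (hN : 2 ∣ N) (hsf : Squarefree N)
    (hk : k ≠ 0) (hks : k ∣ (a ^ 2 + N * d ^ 2) ^ 2)
    (hkB : k ∣ 4 * d * (a * (a ^ 2 - N * d ^ 2))) : k ∣ N ^ 2 := by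
  refine Int.dvd_sq_of_forall_prime_dvd hk hsf.ne_zero fun p hp hpk => ?_
  obtain ⟨hpa, hpN⟩ := prime_dvd_num_and_dvd_of_dvd_duplication hcop hN hp
    (hp.dvd_of_dvd_pow (hpk.trans hks)) (hpk.trans hkB)
  exact ⟨hpN, fun h3 => not_prime_sq_dvd_of_dvd_num hcop hsf hp hpa
    (hp.sq_dvd_of_pow_three_dvd_sq (h3.trans hks))⟩

theorem eq_one_of_dvd_duplication (hcop : IsCoprime a d) (hN : 2 ∣ N) (haN : IsCoprime a N)
    (hk : 0 < k) (hks : k ∣ (a ^ 2 + N * d ^ 2) ^ 2)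
    (hkB : k ∣ 4 * d * (a * (a ^ 2 - N * d ^ 2))) : k = 1 := by
  by_contra hk1
  obtain ⟨p, hp, hpk⟩ := Int.exists_prime_and_dvd (n := k) (by omega)
  obtain ⟨hpa, hpN⟩ := prime_dvd_num_and_dvd_of_dvd_duplication hcop hN hp
    (hp.dvd_of_dvd_pow (hpk.trans hks)) (hpk.trans hkB)
  exact hp.not_isUnit (haN.isUnit_of_dvd' hpa hpN)

theorem isCoprime_of_duplication_eq (hcop : IsCoprime a d) (hsf : Squarefree N)
    (hk : (a ^ 2 + N * d ^ 2) ^ 2 = a' * k)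
    (hgcd : ∀ c, c ∣ (a ^ 2 + N * d ^ 2) ^ 2 → c ∣ 4 * d * (a * (a ^ 2 - N * d ^ 2)) → c ∣ k) :
    IsCoprime a' N := by
  refine isCoprime_of_prime_dvd (fun h => hsf.ne_zero h.2) fun p hp hpa' hpN => ?_
  have hps : p ∣ a ^ 2 + N * d ^ 2 := hp.dvd_of_dvd_pow (hk ▸ hpa'.mul_right k)
  have hpa : p ∣ a := hp.dvd_of_dvd_pow ((dvd_add_left (hpN.mul_right _)).mp hps)
  have hpk : p ^ 2 ∣ k := hgcd _ (pow_dvd_pow_of_dvd hps 2) (sq_dvd_duplication_den hpa hpN)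
  refine not_prime_sq_dvd_of_dvd_num hcop hsf hp hpa (hp.sq_dvd_of_pow_three_dvd_sq ?_)
  rw [hk, pow_succ']
  exact mul_dvd_mul hpa' hpk

end DuplicationGcd

def numDenForm (N : ℤ) (x : ℚ) : ℤ := x.num ^ 2 + N * x.den ^ 2

noncomputable def potential (N : ℤ) (x : ℚ) : ℝ := Real.log (numDenForm N x) / 4

theorem numDenForm_pos {N : ℤ} (hN : 0 < N) (x : ℚ) : 0 < numDenForm N x := by
  have : (0 : ℤ) < x.den := by exact_mod_cast x.pos
  unfold numDenForm
  positivity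

theorem log_bounds_of_pow_four_le_mul_sq {S S' k : ℝ} (hS : 0 < S) (hk : 0 < k)
    (hlo : S ^ 4 ≤ S' * k ^ 2) (hhi : S' * k ^ 2 ≤ 2 * S ^ 4) :
    4 * Real.log S ≤ Real.log S' + 2 * Real.log k ∧
      Real.log S' + 2 * Real.log k ≤ Real.log 2 + 4 * Real.log S := by
  have hS' : 0 < S' := pos_of_mul_pos_left ((pow_pos hS 4).trans_le hlo) (by positivity)
  have hlog : Real.log (S' * k ^ 2) = Real.log S' + 2 * Real.log k := by
    rw [Real.log_mul hS'.ne' (by positivity), Real.log_pow]; norm_num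
  have hlog4 : Real.log (S ^ 4) = 4 * Real.log S := by rw [Real.log_pow]; norm_num
  rw [← hlog, ← hlog4, ← Real.log_mul two_ne_zero (by positivity)]
  exact ⟨Real.log_le_log (by positivity) hlo, Real.log_le_log (by positivity) hhi⟩

theorem exists_xDouble_num_den {N : ℤ} {x : ℚ} (hx : 0 < x ^ 3 + -(N : ℚ) * x) :
    ∃ k : ℤ, 0 < k ∧ (x.num ^ 2 + N * x.den ^ 2) ^ 2 = k * (xDouble (-N) x).num ∧
      4 * x.den * (x.num * (x.num ^ 2 - N * x.den ^ 2)) = k * (xDouble (-N) x).den := by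
  set a := x.num
  set d := (x.den : ℤ)
  set B := 4 * d * (a * (a ^ 2 - N * d ^ 2))
  have hd : 0 < d := Int.natCast_pos.mpr x.pos
  have hxad : x = a / d := by simp only [a, d, Int.cast_natCast, Rat.num_div_den]
  have hB : 0 < B := by
    have : (B : ℚ) = 4 * d ^ 4 * (x ^ 3 + -(N : ℚ) * x) := by
      simp only [B, hxad]; push_cast; field_simp; ring
    exact_mod_cast this ▸ (by positivity : (0 : ℚ) < 4 * d ^ 4 * _)
  have hxB : xDouble (-N) x = ((a ^ 2 + N * d ^ 2) ^ 2 : ℤ) / (B : ℤ) := by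
    simp only [xDouble, B, hxad]; push_cast; field_simp; ring
  obtain ⟨k, hks, hkB⟩ :=
    Rat.exists_eq_mul_div_num_and_eq_mul_div_den ((a ^ 2 + N * d ^ 2) ^ 2) hB.ne'
  rw [← hxB] at hks hkB
  exact ⟨k, pos_of_mul_pos_left (hkB ▸ hB) (by positivity), hks, hkB⟩

theorem exists_duplication_step {N : ℤ} (hN0 : 0 < N) (hN : 2 ∣ N) (hsf : Squarefree N) {x : ℚ}
    (hx : 0 < x ^ 3 + -(N : ℚ) * x) :
    ∃ k : ℤ, 0 < k ∧ k ∣ N ^ 2 ∧ (IsCoprime x.num N → k = 1) ∧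
      IsCoprime (xDouble (-N) x).num N ∧
      4 * potential N x - Real.log k / 2 ≤ potential N (xDouble (-N) x) ∧
      potential N (xDouble (-N) x) ≤ 4 * potential N x + Real.log 2 / 4 - Real.log k / 2 := by
  obtain ⟨k, hk, hks, hkB⟩ := exists_xDouble_num_den hx
  set a := x.num
  set d := (x.den : ℤ)
  set s := a ^ 2 + N * d ^ 2
  set B := 4 * d * (a * (a ^ 2 - N * d ^ 2))
  set a' := (xDouble (-N) x).num
  set d' := ((xDouble (-N) x).den : ℤ)
  have hcop : IsCoprime a d := Int.isCoprime_iff_gcd_eq_one.mpr x.reduced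
  have hcop' : IsCoprime a' d' := Int.isCoprime_iff_gcd_eq_one.mpr (xDouble (-N) x).reduced
  have hgcd : ∀ c, c ∣ s ^ 2 → c ∣ B → c ∣ k := fun c hcs hcB =>
    hcop'.dvd_of_dvd_mul_of_dvd_mul (hks ▸ hcs) (hkB ▸ hcB)
  have hks' : k ∣ s ^ 2 := hks ▸ dvd_mul_right k a'
  have hkB' : k ∣ B := hkB ▸ dvd_mul_right k d'
  have hform : numDenForm N (xDouble (-N) x) * k ^ 2 = s ^ 4 + N * B ^ 2 := by
    change (a' ^ 2 + N * d' ^ 2) * k ^ 2 = _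
    linear_combination (-(s ^ 2 + k * a')) * hks + (-N * (B + k * d')) * hkB
  have hNB : N * B ^ 2 ≤ s ^ 4 := mul_sq_duplication_den_le N a d
  have hNB0 : 0 ≤ N * B ^ 2 := by positivity
  have hs : numDenForm N x = s := rfl
  have hlo : numDenForm N x ^ 4 ≤ numDenForm N (xDouble (-N) x) * k ^ 2 := by
    rw [hform, hs]; linarith
  have hhi : numDenForm N (xDouble (-N) x) * k ^ 2 ≤ 2 * numDenForm N x ^ 4 := by
    rw [hform, hs]; linarith
  obtain ⟨hlo, hhi⟩ := log_bounds_of_pow_four_le_mul_sq (S := numDenForm N x)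
    (S' := numDenForm N (xDouble (-N) x)) (k := k) (by exact_mod_cast numDenForm_pos hN0 x)
    (by exact_mod_cast hk) (by exact_mod_cast hlo) (by exact_mod_cast hhi)
  refine ⟨k, hk, dvd_sq_of_dvd_duplication hcop hN hsf hk.ne' hks' hkB',
    fun haN => eq_one_of_dvd_duplication hcop hN haN hk hks' hkB',
    isCoprime_of_duplication_eq hcop hsf (by rw [hks, mul_comm]) hgcd, ?_, ?_⟩ <;>
  · simp only [potential]
    linarith

theorem naiveHeight_div_sq {a d : ℤ} (hd : d ≠ 0) (hcop : IsCoprime a d) :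
    naiveHeight (a / d ^ 2) = Real.log (max (|a| : ℝ) ((d : ℝ) ^ 2)) := by
  have hd2 : 0 < d ^ 2 := by positivity
  have hcop2 : Nat.Coprime a.natAbs (d ^ 2).natAbs :=
    Int.isCoprime_iff_gcd_eq_one.mp hcop.pow_right
  have hnum := Rat.num_div_eq_of_coprime hd2 hcop2
  have hden := Rat.den_div_eq_of_coprime hd2 hcop2
  push_cast at hnum hden
  rw [naiveHeight, hnum, ← Int.cast_natCast, hden]
  push_cast
  rfl

theorem naiveHeight_div_two_le_potential {N : ℤ} (hN : 1 ≤ N) (x : ℚ) :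
    naiveHeight x / 2 ≤ potential N x ∧
      potential N x ≤ naiveHeight x / 2 + Real.log (N + 1) / 4 := by
  set m : ℤ := max |x.num| x.den
  have hm : 1 ≤ m := le_max_of_le_right (by exact_mod_cast x.pos)
  have hsq : m ^ 2 ≤ numDenForm N x ∧ numDenForm N x ≤ (N + 1) * m ^ 2 := by
    have ha : x.num ^ 2 ≤ m ^ 2 := by
      rw [← sq_abs]; exact pow_le_pow_left₀ (abs_nonneg _) (le_max_left _ _) 2
    have hd : (x.den : ℤ) ^ 2 ≤ m ^ 2 := pow_le_pow_left₀ (by positivity) (le_max_right _ _) 2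
    rcases max_choice |x.num| (x.den : ℤ) with h | h <;>
    · simp only [numDenForm, m, h, sq_abs] at ha hd ⊢
      constructor <;> nlinarith
  have hmR : (1 : ℝ) ≤ m := by exact_mod_cast hm
  have hheight : naiveHeight x = Real.log m := by
    simp only [naiveHeight, m]
    push_cast
    rfl
  have hlog_sq : Real.log ((m : ℝ) ^ 2) = 2 * Real.log m := by
    rw [Real.log_pow]; norm_cast
  have hlog_mul : Real.log ((N + 1) * (m : ℝ) ^ 2) = Real.log (N + 1) + 2 * Real.log m := by
    rw [Real.log_mul (by exact_mod_cast (by omega : N + 1 ≠ 0)) (by positivity), hlog_sq]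
  have h1 : Real.log ((m : ℝ) ^ 2) ≤ Real.log (numDenForm N x) :=
    Real.log_le_log (by positivity) (by exact_mod_cast hsq.1)
  have h2 : Real.log (numDenForm N x) ≤ Real.log ((N + 1) * (m : ℝ) ^ 2) :=
    Real.log_le_log (by exact_mod_cast numDenForm_pos (by omega) x) (by exact_mod_cast hsq.2)
  rw [potential, hheight]
  constructor <;> linarith

open Filter Topology in
theorem Filter.Tendsto.div_pow_of_abs_sub_le {f g : ℕ → ℝ} {b L C : ℝ} (hb : 1 < b)
    (hfg : ∀ n, |g n - f n| ≤ C) (hf : Tendsto (fun n => f n / b ^ n) atTop (𝓝 L)) :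
    Tendsto (fun n => g n / b ^ n) atTop (𝓝 L) := by
  have hb0 : 0 < b := by linarith
  have hdecay : Tendsto (fun n : ℕ => C * (b⁻¹) ^ n) atTop (𝓝 0) := by
    simpa using (tendsto_pow_atTop_nhds_zero_of_lt_one (inv_nonneg.mpr hb0.le)
      (inv_lt_one_of_one_lt₀ hb)).const_mul C
  have hdiff : Tendsto (fun n => (g n - f n) / b ^ n) atTop (𝓝 0) := by
    refine squeeze_zero_norm (fun n => ?_) hdecay
    rw [Real.norm_eq_abs, abs_div, abs_of_pos (pow_pos hb0 n), inv_pow, ← div_eq_mul_inv]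
    exact div_le_div_of_nonneg_right (hfg n) (pow_pos hb0 n).le
  simpa [← add_div] using hf.add hdiff

theorem div_four_pow_le_of_le_four_mul_add {ψ : ℕ → ℝ} {c : ℝ} (hc : 0 ≤ c)
    (h : ∀ n, ψ (n + 1) ≤ 4 * ψ n + c) (n : ℕ) : ψ n / 4 ^ n ≤ ψ 0 + c / 3 := by
  have hgrowth : ∀ n, ψ n ≤ 4 ^ n * ψ 0 + c * (4 ^ n - 1) / 3 := by
    intro n
    induction n with
    | zero => simp
    | succ n ih => rw [pow_succ]; linarith [h n]
  rw [div_le_iff₀ (by positivity)]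
  nlinarith [hgrowth n]

theorem sub_le_div_four_pow_of_four_mul_le {ψ : ℕ → ℝ} {e : ℝ} (he : 0 ≤ e)
    (h0 : 4 * ψ 0 - e ≤ ψ 1) (h : ∀ n, 4 * ψ (n + 1) ≤ ψ (n + 2)) (n : ℕ) :
    ψ 0 - e / 4 ≤ ψ n / 4 ^ n := by
  have hgrowth : ∀ n, 4 ^ n * (ψ 0 - e / 4) ≤ ψ n := by
    intro n
    induction n with
    | zero => rw [pow_zero, one_mul]; linarith
    | succ n ih =>
      cases n with
      | zero => linarith
      | succ m => rw [pow_succ]; linarith [h m]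
  rw [le_div_iff₀ (by positivity), mul_comm]
  exact hgrowth n

open Filter Topology in
theorem limit_sub_potential_mem_Icc {N : ℤ} (hN0 : 0 < N) (hN : 2 ∣ N) (hsf : Squarefree N)
    {x : ℕ → ℚ} (hpos : ∀ n, 0 < x n ^ 3 + -(N : ℚ) * x n)
    (hx : ∀ n, x (n + 1) = xDouble (-N) (x n)) {L : ℝ}
    (hL : Tendsto (fun n => potential N (x n) / 4 ^ n) atTop (𝓝 L)) :
    L - potential N (x 0) ∈ Set.Icc (-(Real.log N / 4)) (Real.log 2 / 12) := by
  choose k hk hkN hk1 hcopN hlo hhi using fun n => exists_duplication_step hN0 hN hsf (hpos n)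
  simp only [← hx] at hlo hhi hcopN
  have hlogk : ∀ n, 0 ≤ Real.log (k n) := fun n => Real.log_nonneg (by exact_mod_cast hk n)
  have hup : L ≤ potential N (x 0) + Real.log 2 / 12 :=
    le_of_tendsto' hL fun n => by
      linarith [div_four_pow_le_of_le_four_mul_add (ψ := fun n => potential N (x n))
        (c := Real.log 2 / 4) (by positivity) (fun n => by linarith [hhi n, hlogk n]) n]
  have hlow : potential N (x 0) - Real.log (k 0) / 8 ≤ L :=
    ge_of_tendsto' hL fun n => by
      linarith [sub_le_div_four_pow_of_four_mul_le (ψ := fun n => potential N (x n))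
        (by linarith [hlogk 0]) (hlo 0)
        (fun n => by simpa [hk1 (n + 1) (hcopN n)] using hlo (n + 1)) n]
  have hk0 : Real.log (k 0) ≤ 2 * Real.log N := by
    calc Real.log (k 0) ≤ Real.log ((N : ℝ) ^ 2) := Real.log_le_log (by exact_mod_cast hk 0)
          (by exact_mod_cast Int.le_of_dvd (by positivity) (hkN 0))
      _ = 2 * Real.log N := by simp [Real.log_pow]
  constructor <;> linarith

theorem stmt_16_general (r D : ℕ) (hsf : Squarefree (2 * r * D))
    (P : (Ecurve (-(2 * r * D : ℚ))).Point) (hP : ¬ IsOfFinAddOrder P)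
    (a d : ℤ) (hcop : IsCoprime a d)
    (hx : xCoord P = (a : ℚ) / (d : ℚ) ^ 2)
    (hhat : ℝ)
    (hlim : Filter.Tendsto
      (fun n : ℕ => naiveHeight (xCoord ((2 ^ n : ℤ) • P)) / 2 / 4 ^ n)
      Filter.atTop (nhds hhat)) :
    -(1 / 4 : ℝ) * Real.log (4 * r * D) ≤
        hhat - (1 / 2 : ℝ) * Real.log (max (|a| : ℝ) ((d : ℝ) ^ 2)) ∧
      hhat - (1 / 2 : ℝ) * Real.log (max (|a| : ℝ) ((d : ℝ) ^ 2)) ≤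
        (1 / 4 : ℝ) * Real.log (2 * r * D + 1) + (1 / 12 : ℝ) * Real.log 2 := by
  obtain ⟨N, hN⟩ : ∃ N : ℤ, N = 2 * r * D := ⟨_, rfl⟩
  have hN1 : 1 ≤ N := by rw [hN]; exact_mod_cast Nat.pos_of_ne_zero hsf.ne_zero
  have hNR : (N : ℝ) = 2 * r * D := by rw [hN]; push_cast; ring
  have hNsf : Squarefree N := by rw [hN]; exact_mod_cast Int.squarefree_natCast.mpr hsf
  obtain ⟨x, hxn⟩ : ∃ x : ℕ → ℚ, ∀ n, x n = xCoord ((2 ^ n : ℤ) • P) := ⟨_, fun _ => rfl⟩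
  simp only [← hxn] at hlim
  have hstep : ∀ n, 0 < x n ^ 3 + -(N : ℚ) * x n ∧ x (n + 1) = xDouble (-N) (x n) := fun n => by
    simpa [hN, hxn] using xCoord_two_pow_succ_zsmul hP n
  have hT : Filter.Tendsto (fun n => potential N (x n) / 4 ^ n) Filter.atTop (nhds hhat) :=
    hlim.div_pow_of_abs_sub_le (C := Real.log (N + 1) / 4) (by norm_num) fun n => by
      obtain ⟨h1, h2⟩ := naiveHeight_div_two_le_potential hN1 (x n)
      rw [abs_le]; constructor <;> linarith
  obtain ⟨hlow, hup⟩ := limit_sub_potential_mem_Icc (by omega)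
    (hN ▸ dvd_mul_of_dvd_left (dvd_mul_right 2 _) _) hNsf (fun n => (hstep n).1)
    (fun n => (hstep n).2) hT
  have hx0 : x 0 = a / d ^ 2 := by simpa [hxn] using hx
  have hd : d ≠ 0 := by
    rintro rfl
    simpa [hx0] using (hstep 0).1
  have hh0 : naiveHeight (x 0) = Real.log (max (|a| : ℝ) ((d : ℝ) ^ 2)) := by
    rw [hx0, naiveHeight_div_sq hd hcop]
  obtain ⟨h1, h2⟩ := naiveHeight_div_two_le_potential hN1 (x 0)
  have hlogN : Real.log N ≤ Real.log (4 * r * D) :=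
    Real.log_le_log (by exact_mod_cast hN1)
      (by rw [hNR]; nlinarith [(by positivity : (0 : ℝ) ≤ r * D)])
  rw [hNR] at h2
  constructor <;> linarith

/-- On `E : y² = x³ - 2rDx` with `2rD` square-free, for `P ∈ E(ℚ)` of infinite order with
`x(P) = a/d²` in lowest terms and Weil height `h(P) = log max{|a|, d²}`, the canonical
height (normalized so that `ĥ(P) = lim (1/2)·h(x([2ⁿ]P))/4ⁿ`) satisfies
`-(1/4)·log(4rD) ≤ ĥ(P) - (1/2)·h(P) ≤ (1/4)·log(2rD+1) + (1/12)·log 2`. -/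
theorem stmt_16 (r D : ℕ) (hr : 0 < r) (hD : 0 < D) (hsf : Squarefree (2 * r * D))
    (P : (Ecurve (-(2 * r * D : ℚ))).Point) (hP : ¬ IsOfFinAddOrder P)
    (a d : ℤ) (hd : 0 < d) (hcop : IsCoprime a d)
    (hx : xCoord P = (a : ℚ) / (d : ℚ) ^ 2)
    (hhat : ℝ)
    (hlim : Filter.Tendsto
      (fun n : ℕ => naiveHeight (xCoord ((2 ^ n : ℤ) • P)) / 2 / 4 ^ n)
      Filter.atTop (nhds hhat)) :
    -(1 / 4 : ℝ) * Real.log (4 * r * D) ≤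
        hhat - (1 / 2 : ℝ) * Real.log (max (|a| : ℝ) ((d : ℝ) ^ 2)) ∧
      hhat - (1 / 2 : ℝ) * Real.log (max (|a| : ℝ) ((d : ℝ) ^ 2)) ≤
        (1 / 4 : ℝ) * Real.log (2 * r * D + 1) + (1 / 12 : ℝ) * Real.log 2 :=
  stmt_16_general r D hsf P hP a d hcop hx hhat hlim
end
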